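/- arXiv:2507.11034 — 2 statements merged into one kernel-verified Lean document; each statement's English description precedes it below -/
import Mathlib

section
/- For all integers k ≥ 2 and n ≥ 9(k²+k+1)+6, one has ex(n,{kP₃, K₃}) = (k−1)(n−k+1). -/
open SimpleGraph

/-- `G` contains a (not necessarily induced) subgraph copy of `H`. -/
def GContains {V W : Type*} (G : SimpleGraph V) (H : SimpleGraph W) : Prop :=
  ∃ f : W ↪ V, ∀ a b, H.Adj a b → G.Adj (f a) (f b)

/-- The number of edges of a graph. -/
noncomputable def eCount {V : Type*} (G : SimpleGraph V) : ℕ := G.edgeSet.ncard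

/-- The Turán number of a "freeness" predicate `P` : the maximum number of edges of a
graph on `n` vertices satisfying `P`. -/
noncomputable def exNum (n : ℕ) (P : SimpleGraph (Fin n) → Prop) : ℕ :=
  sSup {m | ∃ G : SimpleGraph (Fin n), P G ∧ eCount G = m}

/-- The disjoint union of `k` copies of the path on `ℓ` vertices. -/
def kPaths (k ℓ : ℕ) : SimpleGraph (Fin k × Fin ℓ) where
  Adj x y := x.1 = y.1 ∧ ((x.2 : ℕ) + 1 = (y.2 : ℕ) ∨ (y.2 : ℕ) + 1 = (x.2 : ℕ))
  symm := ⟨fun x y h => ⟨h.1.symm, h.2.symm⟩⟩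
  loopless := ⟨fun x h => by obtain ⟨-, h⟩ := h; omega⟩

/-- The linear forest with one path on `len i` vertices for each `i ∈ s`. -/
def linearForest (s : Finset ℕ) (len : ℕ → ℕ) :
    SimpleGraph {p : ℕ × ℕ // p.1 ∈ s ∧ p.2 < len p.1} where
  Adj x y := x.val.1 = y.val.1 ∧ (x.val.2 + 1 = y.val.2 ∨ y.val.2 + 1 = x.val.2)
  symm := ⟨fun x y h => ⟨h.1.symm, h.2.symm⟩⟩
  loopless := ⟨fun x h => by obtain ⟨-, h⟩ := h; omega⟩

/-- The join `I_a + M_m` of an independent set of `a` vertices with a perfect matching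
on `2m` vertices (vertices `2t` and `2t+1` are matched). -/
def joinIM (a m : ℕ) : SimpleGraph (Fin a ⊕ Fin (2 * m)) where
  Adj x y :=
    match x, y with
    | Sum.inl _, Sum.inr _ => True
    | Sum.inr _, Sum.inl _ => True
    | Sum.inl _, Sum.inl _ => False
    | Sum.inr i, Sum.inr j => i ≠ j ∧ (i : ℕ) / 2 = (j : ℕ) / 2
  symm := by
    refine ⟨?_⟩
    rintro (x | x) (y | y) h
    · exact h.elim
    · trivial
    · trivial
    · exact ⟨h.1.symm, h.2.symm⟩
  loopless := by
    refine ⟨?_⟩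
    rintro (x | x) h
    · exact h
    · exact h.1 rfl

/-- `E'` is an edge control set of `F`: a set of edges of `F` such that every other edge of
`F` shares an endpoint with some edge of `E'`. -/
def IsEdgeControlSet {V : Type*} (F : SimpleGraph V) (E' : Finset (Sym2 V)) : Prop :=
  (E' : Set (Sym2 V)) ⊆ F.edgeSet ∧
    ∀ e ∈ F.edgeSet, e ∉ E' → ∃ e' ∈ E', ∃ v, v ∈ e ∧ v ∈ e'

/-- The edge control number `β₁(F)`: the minimum size of an edge control set of `F`. -/
noncomputable def edgeControlNumber {V : Type*} (F : SimpleGraph V) : ℕ :=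
  sInf {m | ∃ E' : Finset (Sym2 V), IsEdgeControlSet F E' ∧ E'.card = m}

/-- The number of triangles (copies of `K₃`) in `F`. -/
noncomputable def triCount {V : Type*} (F : SimpleGraph V) : ℕ :=
  {t : Finset V | F.IsNClique 3 t}.ncard

/-- `G` contains no member of the family `𝒢₁(F) = {F[V(F) ∖ S] : S ⊆ V(F), F[S] edgeless}`. -/
def G1FamFree {VF V : Type*} (F : SimpleGraph VF) (G : SimpleGraph V) : Prop :=
  ∀ S : Set VF, (∀ a ∈ S, ∀ b ∈ S, ¬ F.Adj a b) → ¬ GContains G (F.induce Sᶜ)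

/-- `G` contains no member of the family `𝒢₂(F) = {F[V(F) ∖ S] : S ⊆ V(F), e(F[S]) ≤ 1}`. -/
def G2FamFree {VF V : Type*} (F : SimpleGraph VF) (G : SimpleGraph V) : Prop :=
  ∀ S : Set VF, eCount (F.induce S) ≤ 1 → ¬ GContains G (F.induce Sᶜ)

/-- `G` contains no member of the family
`𝓗ᵢ(F) = {F[V(F) ∖ S] : S ⊆ V(F), Δ(F[S]) ≤ 1, e(F[S]) ≤ i}`. -/
def HiFamFree {VF V : Type*} (F : SimpleGraph VF) (i : ℕ) (G : SimpleGraph V) : Prop :=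
  ∀ S : Set VF, (∀ v ∈ S, (F.neighborSet v ∩ S).ncard ≤ 1) →
    eCount (F.induce S) ≤ i → ¬ GContains G (F.induce Sᶜ)

/-- `G` contains no member of the family `𝓗(F) = {F[V(F) ∖ S] : S ⊆ V(F), Δ(F[S]) ≤ 1}`. -/
def HFamFree {VF V : Type*} (F : SimpleGraph VF) (G : SimpleGraph V) : Prop :=
  ∀ S : Set VF, (∀ v ∈ S, (F.neighborSet v ∩ S).ncard ≤ 1) →
    ¬ GContains G (F.induce Sᶜ)

/-- The common neighborhood of `S` outside `S`. -/
def commonNbhd {V : Type*} (G : SimpleGraph V) (S : Set V) : Set V :=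
  {v | v ∉ S ∧ ∀ u ∈ S, G.Adj v u}

/-- The quantity `n_k = (n/3 − C(ℓ,2)) / ((⌈ℓ/2⌉+1)·C(ℓ,⌊ℓ/2⌋)) + kℓ`. -/
noncomputable def nkQ (n k ℓ : ℕ) : ℚ :=
  ((n : ℚ) / 3 - (ℓ.choose 2 : ℚ)) /
    ((((ℓ + 1) / 2 + 1 : ℕ) : ℚ) * (ℓ.choose (ℓ / 2) : ℚ)) + (k : ℚ) * (ℓ : ℚ)

/-- The set of vertices belonging to some `⌊ℓ/2⌋`-set whose common neighborhood outside it
has size at least `n_k`. -/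
def bigA (n k ℓ : ℕ) (G : SimpleGraph (Fin n)) : Set (Fin n) :=
  {v | ∃ S : Finset (Fin n), v ∈ S ∧ S.card = ℓ / 2 ∧
    nkQ n k ℓ ≤ ((commonNbhd G ↑S).ncard : ℚ)}

/-!
Vertices of degree at least `3k - 1` can greedily be made the centres of disjoint paths `P₃`, so
a `kP₃`-free graph has `d ≤ k - 1` of them, and the other vertices span no `(k - d)P₃`.
If `d = k - 1`, the other vertices span a matching; as `G` is triangle-free, each high-degree
vertex misses an end of every matching edge and each other vertex misses an end of every edge
among the high-degree vertices, which gives `e(G) ≤ (k - 1)(n - k + 1)`. If `d < k - 1`, a maximal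
packing of paths `P₃` among the low-degree vertices has at most `3(k - 1 - d)` vertices,
outside of which the graph is again a matching, and for large `n` degree counting gives the bound
with room to spare. The complete bipartite graph `K_{k-1, n-k+1}` attains it.
-/

open Finset

lemma gContains_iff_isContained {V W : Type*} {G : SimpleGraph V} {H : SimpleGraph W} :
    GContains G H ↔ H ⊑ G :=
  isContained_iff_exists_le_comap.symm

lemma not_gContains_top_iff_cliqueFree {V : Type*} {G : SimpleGraph V} :
    ¬ GContains G (⊤ : SimpleGraph (Fin 3)) ↔ G.CliqueFree 3 := by
  rw [gContains_iff_isContained, ← not_cliqueFree_iff_top_isContained, not_not]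

lemma eCount_eq_card_edgeFinset {V : Type*} [Fintype V] (G : SimpleGraph V)
    [DecidableRel G.Adj] : eCount G = #G.edgeFinset := by
  rw [eCount, ← coe_edgeFinset, Set.ncard_coe_finset]

lemma Nat.exists_le_and_not_succ {P : ℕ → Prop} (h0 : P 0) :
    ∀ {s : ℕ}, ¬ P (s + 1) → ∃ t ≤ s, P t ∧ ¬ P (t + 1)
  | 0, h => ⟨0, le_rfl, h0, h⟩
  | s + 1, h => by
    by_cases hs : P (s + 1)
    · exact ⟨s + 1, le_rfl, hs, h⟩
    · obtain ⟨t, hts, ht⟩ := Nat.exists_le_and_not_succ h0 hs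
      exact ⟨t, hts.trans s.le_succ, ht⟩

lemma Nat.le_sub_one_mul_of_two_mul_le {k n d E : ℕ} (hd : d < k - 1)
    (hn : 9 * (k ^ 2 + k + 1) + 6 ≤ n)
    (hE : 2 * E ≤ 2 * (d * (n - 1) + 3 * (k - 1 - d) * (3 * k - 2)) + n) :
    E ≤ (k - 1) * (n - k + 1) := by
  obtain ⟨s, rfl⟩ : ∃ s, k = d + s + 2 := ⟨k - d - 2, by omega⟩
  obtain ⟨N, rfl⟩ : ∃ N, n = d + s + 1 + N :=
    ⟨n - (d + s + 1), (Nat.add_sub_of_le (by nlinarith)).symm⟩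
  rw [show d + s + 1 + N - 1 = d + s + N by omega, show d + s + 2 - 1 - d = s + 1 by omega,
    show 3 * (d + s + 2) - 2 = 3 * d + 3 * s + 4 by omega] at hE
  rw [show d + s + 2 - 1 = d + s + 1 by omega, show d + s + 1 + N - (d + s + 2) + 1 = N by omega]
  nlinarith

namespace SimpleGraph

section DegreeIn

variable {V : Type*} (G : SimpleGraph V) [DecidableRel G.Adj]

def degreeIn (A : Finset V) (v : V) : ℕ := #{w ∈ A | G.Adj v w}

lemma degreeIn_le_card (A : Finset V) (v : V) : G.degreeIn A v ≤ #A := card_filter_le _ _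

variable {G} in
lemma degreeIn_mono {A B : Finset V} (h : A ⊆ B) (v : V) : G.degreeIn A v ≤ G.degreeIn B v :=
  card_le_card (filter_subset_filter _ h)

lemma sum_degreeIn_comm (A B : Finset V) :
    ∑ x ∈ A, G.degreeIn B x = ∑ x ∈ B, G.degreeIn A x := by
  simpa [bipartiteAbove, bipartiteBelow, degreeIn, G.adj_comm] using
    sum_card_bipartiteAbove_eq_sum_card_bipartiteBelow (s := A) (t := B) G.Adj

variable [Fintype V] [DecidableEq V]

lemma degree_eq_degreeIn_add_degreeIn_compl (A : Finset V) (v : V) :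
    G.degree v = G.degreeIn A v + G.degreeIn Aᶜ v := by
  rw [← card_neighborFinset_eq_degree, neighborFinset_eq_filter, degreeIn, degreeIn,
    ← card_union_of_disjoint (disjoint_filter_filter disjoint_compl_right), ← filter_union,
    union_compl]

lemma two_mul_card_edgeFinset_eq (A : Finset V) :
    2 * #G.edgeFinset = ∑ x ∈ A, G.degreeIn A x + 2 * ∑ x ∈ A, G.degreeIn Aᶜ x +
      ∑ x ∈ Aᶜ, G.degreeIn Aᶜ x := by
  rw [← sum_degrees_eq_twice_card_edges, ← sum_add_sum_compl A]
  simp only [G.degree_eq_degreeIn_add_degreeIn_compl A, sum_add_distrib,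
    G.sum_degreeIn_comm Aᶜ A]
  ring

lemma two_mul_card_edgeFinset_le (A : Finset V) :
    2 * #G.edgeFinset ≤ 2 * ∑ x ∈ A, G.degree x + ∑ x ∈ Aᶜ, G.degreeIn Aᶜ x := by
  simp only [G.two_mul_card_edgeFinset_eq A, G.degree_eq_degreeIn_add_degreeIn_compl A,
    sum_add_distrib]
  omega

end DegreeIn

section TriangleFree

variable {V : Type*} [DecidableEq V] {G : SimpleGraph V} [DecidableRel G.Adj]

lemma sum_degreeIn_le_two_mul_sum_sdiff {U X : Finset V} (hXU : X ⊆ U)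
    (hX : ∀ x ∈ X, ∀ y ∈ X, ¬ G.Adj x y) :
    ∑ u ∈ U, G.degreeIn U u ≤ 2 * ∑ u ∈ U \ X, G.degreeIn U u := by
  have hXsdiff : ∀ x ∈ X, G.degreeIn U x = G.degreeIn (U \ X) x := fun x hx => by
    simp only [degreeIn]
    congr 1
    ext y
    simp only [mem_filter, mem_sdiff]
    exact ⟨fun ⟨hy, hxy⟩ => ⟨⟨hy, fun hyX => hX x hx y hyX hxy⟩, hxy⟩,
      fun ⟨⟨hy, _⟩, hxy⟩ => ⟨hy, hxy⟩⟩
  have hsumX : ∑ x ∈ X, G.degreeIn U x ≤ ∑ u ∈ U \ X, G.degreeIn U u := by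
    rw [sum_congr rfl hXsdiff, sum_degreeIn_comm]
    exact sum_le_sum fun u _ => degreeIn_mono hXU u
  rw [← sum_sdiff hXU]
  omega

lemma CliqueFree.sum_degreeIn_add_two_mul_degreeIn_le (h3 : G.CliqueFree 3) {U : Finset V}
    (hU : ∀ u ∈ U, G.degreeIn U u ≤ 1) (v : V) :
    ∑ u ∈ U, G.degreeIn U u + 2 * G.degreeIn U v ≤ 2 * #U := by
  have hind : ∀ x ∈ {u ∈ U | G.Adj v u}, ∀ y ∈ {u ∈ U | G.Adj v u}, ¬ G.Adj x y := by
    intro x hx y hy hxy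
    simp only [mem_filter] at hx hy
    exact h3 {v, x, y} (is3Clique_triple_iff.mpr ⟨hx.2, hy.2, hxy⟩)
  have hsdiff : ∑ u ∈ U \ {u ∈ U | G.Adj v u}, G.degreeIn U u ≤ #U - G.degreeIn U v := by
    rw [degreeIn, ← card_sdiff_of_subset (filter_subset _ _)]
    exact (sum_le_card_nsmul _ _ 1 fun u hu => hU u (mem_sdiff.mp hu).1).trans (by simp)
  have := sum_degreeIn_le_two_mul_sum_sdiff (filter_subset _ _) hind
  have := G.degreeIn_le_card U v
  omega

lemma CliqueFree.card_edgeFinset_le_of_degreeIn_compl_le_one [Fintype V] (h3 : G.CliqueFree 3)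
    {D : Finset V} (hD : D.Nonempty) (hU : ∀ u ∈ Dᶜ, G.degreeIn Dᶜ u ≤ 1)
    (hcard : #D * #D ≤ #Dᶜ) : #G.edgeFinset ≤ #D * #Dᶜ := by
  have hE := G.two_mul_card_edgeFinset_eq D
  have hUU : ∑ u ∈ Dᶜ, G.degreeIn Dᶜ u ≤ #Dᶜ :=
    (sum_le_card_nsmul _ _ 1 hU).trans (by simp)
  by_cases hDD : ∃ v ∈ D, ∃ w ∈ D, G.Adj v w
  · obtain ⟨v, hv, w, hw, hvw⟩ := hDD
    have hDU : ∀ u ∈ Dᶜ, G.degreeIn D u + 1 ≤ #D := fun u _ => by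
      refine card_lt_card (filter_ssubset.mpr ?_)
      by_contra! h
      exact h3 {u, v, w} (is3Clique_triple_iff.mpr ⟨h v hv, h w hw, hvw⟩)
    have hsumDU : ∑ u ∈ Dᶜ, (G.degreeIn D u + 1) ≤ #Dᶜ * #D := sum_le_card_nsmul _ _ _ hDU
    have hDD : ∑ x ∈ D, G.degreeIn D x ≤ #D * #D :=
      sum_le_card_nsmul _ _ _ fun x _ => G.degreeIn_le_card D x
    rw [sum_add_distrib, ← sum_degreeIn_comm, sum_const, smul_eq_mul, mul_one] at hsumDU
    nlinarith
  · push Not at hDD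
    have hDD0 : ∑ x ∈ D, G.degreeIn D x = 0 :=
      sum_eq_zero fun x hx => card_eq_zero.mpr (filter_eq_empty_iff.mpr (hDD x hx))
    have hsum : #D * ∑ u ∈ Dᶜ, G.degreeIn Dᶜ u + 2 * ∑ x ∈ D, G.degreeIn Dᶜ x ≤
        #D * (2 * #Dᶜ) := by
      have := sum_le_sum fun v (_ : v ∈ D) => h3.sum_degreeIn_add_two_mul_degreeIn_le hU v
      rwa [sum_add_distrib, sum_const, smul_eq_mul, ← mul_sum, sum_const, smul_eq_mul] at this
    have := Nat.le_mul_of_pos_left (∑ u ∈ Dᶜ, G.degreeIn Dᶜ u) hD.card_pos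
    nlinarith

end TriangleFree

section Packing

variable {V : Type*} (G : SimpleGraph V)

structure IsP3Packing (S : Finset V) {m : ℕ} (f : Fin m × Fin 3 → V) : Prop where
  injective : Function.Injective f
  mem : ∀ p, f p ∈ S
  adj_left : ∀ i, G.Adj (f (i, 0)) (f (i, 1))
  adj_right : ∀ i, G.Adj (f (i, 1)) (f (i, 2))

variable {G}

lemma isP3Packing_zero (S : Finset V) (f : Fin 0 × Fin 3 → V) : G.IsP3Packing S f :=
  ⟨fun p => p.1.elim0, fun p => p.1.elim0, fun i => i.elim0, fun i => i.elim0⟩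

lemma IsP3Packing.kPaths_isContained {S : Finset V} {m : ℕ} {f : Fin m × Fin 3 → V}
    (hf : G.IsP3Packing S f) : kPaths m 3 ⊑ G := by
  refine gContains_iff_isContained.mp ⟨⟨f, hf.injective⟩, ?_⟩
  rintro ⟨i, j⟩ ⟨i', j'⟩ ⟨rfl, hjj'⟩
  fin_cases j <;> fin_cases j' <;>
    simp_all [hf.adj_left i, hf.adj_right i, (hf.adj_left i).symm, (hf.adj_right i).symm]

lemma IsP3Packing.mono {S T : Finset V} {m : ℕ} {f : Fin m × Fin 3 → V}
    (hf : G.IsP3Packing S f) (hST : S ⊆ T) : G.IsP3Packing T f :=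
  ⟨hf.injective, fun p => hST (hf.mem p), hf.adj_left, hf.adj_right⟩

lemma IsP3Packing.snoc {S : Finset V} {m : ℕ} {f : Fin m × Fin 3 → V}
    (hf : G.IsP3Packing S f) {a v b : V} (ha : a ∈ S) (hv : v ∈ S) (hb : b ∈ S)
    (hfa : a ∉ Set.range f) (hfv : v ∉ Set.range f) (hfb : b ∉ Set.range f)
    (hab : a ≠ b) (hav : G.Adj a v) (hvb : G.Adj v b) :
    G.IsP3Packing S (fun p : Fin (m + 1) × Fin 3 => Fin.lastCases (![a, v, b] p.2)
      (fun i => f (i, p.2)) p.1) := by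
  refine ⟨?_, ?_, fun i => ?_, fun i => ?_⟩
  · have hva := hav.ne'
    have hvb' := hvb.ne
    have hnew : ∀ j, ![a, v, b] j ∉ Set.range f := fun j => by fin_cases j <;> assumption
    rintro ⟨i, j⟩ ⟨i', j'⟩ h
    induction i using Fin.lastCases with
    | last =>
      induction i' using Fin.lastCases with
      | last => fin_cases j <;> fin_cases j' <;> simp_all
      | cast i' => exact absurd ⟨(i', j'), by simpa using h.symm⟩ (hnew j)
    | cast i =>
      induction i' using Fin.lastCases with
      | last => exact absurd ⟨(i, j), by simpa using h⟩ (hnew j')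
      | cast i' => simpa using Prod.ext_iff.mp (hf.injective (by simpa using h))
  · rintro ⟨i, j⟩
    induction i using Fin.lastCases with
    | last => fin_cases j <;> simpa
    | cast i => simpa using hf.mem (i, j)
  · induction i using Fin.lastCases with
    | last => simpa
    | cast i => simpa using hf.adj_left i
  · induction i using Fin.lastCases with
    | last => simpa
    | cast i => simpa using hf.adj_right i

variable [DecidableEq V] [DecidableRel G.Adj]

lemma IsP3Packing.degreeIn_sdiff_le_one {U : Finset V} {t : ℕ} {f : Fin t × Fin 3 → V}
    (hf : G.IsP3Packing U f) (hmax : ∀ g : Fin (t + 1) × Fin 3 → V, ¬ G.IsP3Packing U g) :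
    ∀ x ∈ U \ univ.image f, G.degreeIn (U \ univ.image f) x ≤ 1 := by
  intro x hx
  by_contra! h
  obtain ⟨a, ha, b, hb, hab⟩ := one_lt_card.mp h
  simp only [mem_filter, mem_sdiff, mem_image, mem_univ, true_and, not_exists] at ha hb hx
  exact hmax _ (hf.snoc ha.1.1 hx.1 hb.1.1 (by simpa using ha.1.2) (by simpa using hx.2)
    (by simpa using hb.1.2) hab ha.2.symm hb.2)

variable [Fintype V]

lemma exists_adj_adj_notMem {X : Finset V} {v : V} (h : #X + 2 ≤ G.degree v) :
    ∃ a b, a ≠ b ∧ G.Adj v a ∧ G.Adj v b ∧ a ∉ X ∧ b ∉ X := by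
  have : 1 < #(G.neighborFinset v \ X) :=
    lt_of_lt_of_le (by rw [card_neighborFinset_eq_degree]; omega) (le_card_sdiff X _)
  obtain ⟨a, ha, b, hb, hab⟩ := one_lt_card.mp this
  simp only [mem_sdiff, mem_neighborFinset] at ha hb
  exact ⟨a, b, hab, ha.1, hb.1, ha.2, hb.2⟩

lemma kPaths_isContained_of_packing_compl {k : ℕ} (D : Finset V)
    (hD : ∀ v ∈ D, 3 * k - 1 ≤ G.degree v) {m : ℕ} {f : Fin m × Fin 3 → V}
    (hf : G.IsP3Packing Dᶜ f) (hmk : m + #D = k) : kPaths k 3 ⊑ G := by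
  induction D using Finset.induction_on generalizing m with
  | empty => simp only [card_empty, add_zero] at hmk; exact hmk ▸ hf.kPaths_isContained
  | insert v D hvD ih =>
    rw [card_insert_of_notMem hvD] at hmk
    have hX : #(univ.image f ∪ D) + 2 ≤ G.degree v := by
      have := card_union_le (univ.image f) D
      have := card_image_le (s := univ) (f := f)
      have := hD v (mem_insert_self v D)
      simp only [card_univ, Fintype.card_prod, Fintype.card_fin] at *
      omega
    obtain ⟨a, b, hab, hva, hvb, ha, hb⟩ := exists_adj_adj_notMem hX
    simp only [mem_union, mem_image, mem_univ, true_and, not_or] at ha hb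
    have hfv : v ∉ Set.range f := by
      rintro ⟨p, hp⟩
      simpa [hp] using hf.mem p
    refine ih (fun w hw => hD w (mem_insert_of_mem hw))
      ((hf.mono (compl_subset_compl.mpr (subset_insert v D))).snoc ?_ ?_ ?_ ha.1 hfv hb.1
        hab hva.symm hvb) (by omega)
    · simpa using ha.2
    · simpa using hvD
    · simpa using hb.2

lemma two_mul_card_edgeFinset_le_of_packing_free {D : Finset V} {c s : ℕ}
    (hc : ∀ u ∈ Dᶜ, G.degree u ≤ c)
    (hs : ∀ f : Fin (s + 1) × Fin 3 → V, ¬ G.IsP3Packing Dᶜ f) :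
    2 * #G.edgeFinset ≤ 2 * (#D * (Fintype.card V - 1) + 3 * s * c) + Fintype.card V := by
  obtain ⟨t, hts, ⟨f, hf⟩, hmax⟩ :=
    Nat.exists_le_and_not_succ (P := fun t => ∃ f : Fin t × Fin 3 → V, G.IsP3Packing Dᶜ f)
      ⟨_, isP3Packing_zero _ (fun p => p.1.elim0)⟩ (s := s) (fun ⟨f, hf⟩ => hs f hf)
  set T := univ.image f
  have hTD : ∀ x ∈ T, x ∈ Dᶜ := fun x hx => by
    obtain ⟨p, -, rfl⟩ := mem_image.mp hx
    exact hf.mem p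
  have hE := G.two_mul_card_edgeFinset_le (D ∪ T)
  rw [compl_union, ← sdiff_eq_inter_compl,
    sum_union (disjoint_right.mpr fun x hx => mem_compl.mp (hTD x hx))] at hE
  have hW : ∑ x ∈ Dᶜ \ T, G.degreeIn (Dᶜ \ T) x ≤ Fintype.card V :=
    (sum_le_card_nsmul _ _ 1 (hf.degreeIn_sdiff_le_one (not_exists.mp hmax))).trans
      (by simpa using card_le_univ _)
  have hDsum : ∑ x ∈ D, G.degree x ≤ #D * (Fintype.card V - 1) :=
    sum_le_card_nsmul _ _ _ fun x _ => Nat.le_sub_one_of_lt (G.degree_lt_card_verts x)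
  have hTsum : ∑ x ∈ T, G.degree x ≤ 3 * s * c :=
    (sum_le_card_nsmul _ _ _ fun x hx => hc x (hTD x hx)).trans
      (Nat.mul_le_mul_right _ (card_image_le.trans (by
        simp only [card_univ, Fintype.card_prod, Fintype.card_fin]
        omega)))
  omega

end Packing

theorem CliqueFree.card_edgeFinset_le_of_kPaths_free {V : Type*} [Fintype V] [DecidableEq V]
    {G : SimpleGraph V} [DecidableRel G.Adj] {k : ℕ} (hk : 2 ≤ k)
    (hn : 9 * (k ^ 2 + k + 1) + 6 ≤ Fintype.card V) (h3 : G.CliqueFree 3)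
    (hP : (kPaths k 3).Free G) :
    #G.edgeFinset ≤ (k - 1) * (Fintype.card V - k + 1) := by
  set D : Finset V := {v | 3 * k - 1 ≤ G.degree v}
  have hD : ∀ v ∈ D, 3 * k - 1 ≤ G.degree v := fun v hv => (mem_filter.mp hv).2
  have hnoPack : ∀ m, m + #D = k → ∀ f : Fin m × Fin 3 → V, ¬ G.IsP3Packing Dᶜ f :=
    fun m hm f hf => hP (kPaths_isContained_of_packing_compl D hD hf hm)
  have hDk : #D ≤ k - 1 := by
    by_contra! h
    obtain ⟨D₀, hD₀, hcard⟩ := exists_subset_card_eq (show k ≤ #D by omega)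
    exact hP (kPaths_isContained_of_packing_compl D₀ (fun v hv => hD v (hD₀ hv))
      (isP3Packing_zero _ (fun p => p.1.elim0)) (by omega))
  rcases hDk.eq_or_lt with hd | hd
  · have hU := (isP3Packing_zero Dᶜ (fun p => p.1.elim0)).degreeIn_sdiff_le_one
      (hnoPack 1 (by omega))
    simp only [univ_eq_empty, image_empty, sdiff_empty] at hU
    have := h3.card_edgeFinset_le_of_degreeIn_compl_le_one (card_pos.mp (by omega)) hU (by
      have := Nat.mul_self_le_mul_self (Nat.sub_le k 1)
      rw [card_compl, hd]
      rw [sq] at hn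
      omega)
    rwa [card_compl, hd, show Fintype.card V - (k - 1) = Fintype.card V - k + 1 by omega] at this
  · have hc : ∀ u ∈ Dᶜ, G.degree u ≤ 3 * k - 2 := fun u hu => by
      simp only [D, mem_compl, mem_filter, mem_univ, true_and] at hu
      omega
    exact Nat.le_sub_one_mul_of_two_mul_le hd hn
      (two_mul_card_edgeFinset_le_of_packing_free hc (hnoPack _ (by omega)))

lemma IsVertexCover.le_card_of_kPaths_isContained {V : Type*} {G : SimpleGraph V} {c : Finset V}
    (hc : G.IsVertexCover c) {m ℓ : ℕ} (h : kPaths m (ℓ + 2) ⊑ G) : m ≤ #c := by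
  classical
  obtain ⟨φ⟩ := h
  let g : Fin m → V := fun i => if φ (i, 0) ∈ c then φ (i, 0) else φ (i, 1)
  have hg : ∀ i, g i ∈ c := fun i => by
    have : G.Adj (φ (i, 0)) (φ (i, 1)) := φ.toHom.map_adj (by simp [kPaths])
    have := hc this
    simp only [g, mem_coe] at this ⊢
    split_ifs <;> tauto
  have hinj : Function.Injective g := fun i i' h => by
    simp only [g] at h
    split_ifs at h <;> exact congrArg Prod.fst (φ.injective h)
  simpa using card_le_card_of_injOn (s := univ) g (fun i _ => hg i) hinj.injOn

section CompleteBipartite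

variable {V : Type*}

lemma top_between_compl_kPaths_free (s : Finset V) :
    (kPaths (#s + 1) 3).Free ((⊤ : SimpleGraph V).between s (↑s)ᶜ) := fun h => by
  have hc : ((⊤ : SimpleGraph V).between s (↑s)ᶜ).IsVertexCover s := fun v w h => by
    rw [between_adj] at h
    tauto
  have := hc.le_card_of_kPaths_isContained (ℓ := 1) h
  omega

lemma card_edgeFinset_top_between_compl [Fintype V] [DecidableEq V] (s : Finset V) :
    #((⊤ : SimpleGraph V).between s (↑s)ᶜ).edgeFinset = #s * #sᶜ := by
  have hdeg : ∀ v ∈ s, ((⊤ : SimpleGraph V).between s (↑s)ᶜ).degree v = #sᶜ := by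
    intro v hv
    rw [← card_neighborFinset_eq_degree]
    congr 1
    ext w
    simp only [mem_neighborFinset, between_adj, top_adj, Set.mem_compl_iff, mem_coe, mem_compl]
    grind
  rw [← isBipartiteWith_sum_degrees_eq_card_edges (t := ↑sᶜ)
    (by simpa using between_isBipartiteWith disjoint_compl_right), sum_congr rfl hdeg, sum_const,
    smul_eq_mul]

end CompleteBipartite

end SimpleGraph

/-- Corollary: Turán number of `kP₃` and `K₃`. -/
theorem ex_kP3_and_K3 (k n : ℕ) (hk : 2 ≤ k) (hn : 9 * (k ^ 2 + k + 1) + 6 ≤ n) :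
    exNum n (fun G => ¬ GContains G (kPaths k 3) ∧
        ¬ GContains G (⊤ : SimpleGraph (Fin 3))) =
      (k - 1) * (n - k + 1) := by
  classical
  refine IsGreatest.csSup_eq ⟨?_, ?_⟩
  · obtain ⟨s, -, hs⟩ := exists_subset_card_eq (s := (univ : Finset (Fin n)))
      (show k - 1 ≤ #univ by rw [card_univ, Fintype.card_fin]; omega)
    refine ⟨(⊤ : SimpleGraph (Fin n)).between s (↑s)ᶜ, ⟨?_, ?_⟩, ?_⟩
    · have := top_between_compl_kPaths_free s
      rw [hs, Nat.sub_add_cancel (by omega)] at this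
      exact gContains_iff_isContained.not.mpr this
    · exact not_gContains_top_iff_cliqueFree.mpr
        ((between_isBipartite disjoint_compl_right).cliqueFree (by norm_num))
    · rw [eCount_eq_card_edgeFinset, card_edgeFinset_top_between_compl, card_compl, hs,
        Fintype.card_fin, show n - (k - 1) = n - k + 1 by omega]
  · rintro _ ⟨G, ⟨hP, h3⟩, rfl⟩
    rw [eCount_eq_card_edgeFinset]
    simpa using (not_gContains_top_iff_cliqueFree.mp h3).card_edgeFinset_le_of_kPaths_free hk
      (by simpa using hn) (gContains_iff_isContained.not.mp hP)
end

section
/- Let k ≥ 2 be an integer and n ≥ 9(k²+k+1). Let G be a kP₃-free graph on n vertices and let A ⊆ V(G) be a set of k−1 vertices each of degree at least n/9 in G. Then the subgraph of G induced on V(G)∖A has maximum degree at most 1. -/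
open SimpleGraph

/-! If some `v ∉ A` had two neighbours `x, y` outside `A`, then `x v y` would be a `P₃` avoiding
`A`. Every `a ∈ A` has degree at least `n / 9 ≥ 3k`, which leaves room to choose, one vertex
of `A` at a time, two neighbours avoiding `x, v, y`, `A` and all earlier choices. The `k - 1`
cherries so obtained, together with `x v y`, form a copy of `kP₃`. -/

open Finset

theorem Set.exists_ne_mem_sdiff_of_card_add_two_le {V : Type*} {s : Set V} {B : Finset V}
    (h : #B + 2 ≤ s.ncard) : ∃ x ∈ s \ ↑B, ∃ y ∈ s \ ↑B, x ≠ y := by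
  have hs : s.Finite := Set.finite_of_ncard_pos (by omega)
  have := Set.le_ncard_sdiff (↑B) s
  rw [Set.ncard_coe_finset] at this
  exact (Set.one_lt_ncard hs.sdiff).mp (by omega)

namespace SimpleGraph

variable {α β V : Type*} {H : SimpleGraph α} {H' : SimpleGraph β} {G : SimpleGraph V}

def kPathsAddIso (m m' ℓ : ℕ) : kPaths (m + m') ℓ ≃g kPaths m ℓ ⊕g kPaths m' ℓ where
  toEquiv := (finSumFinEquiv.symm.prodCongr (Equiv.refl _)).trans (Equiv.sumProdDistrib _ _ _)
  map_rel_iff' := by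
    rintro ⟨i, a⟩ ⟨j, b⟩
    induction i using Fin.addCases <;> induction j using Fin.addCases <;>
      simp [kPaths, Fin.ext_iff] <;> omega

namespace Copy

def sumElim (f : Copy H G) (g : Copy H' G) (h : Disjoint (Set.range f) (Set.range g)) :
    Copy (H ⊕g H') G where
  toHom := ⟨Sum.elim f g, by
    rintro (a | b) (a' | b') hadj
    · exact f.toHom.map_adj hadj
    · simp at hadj
    · simp at hadj
    · exact g.toHom.map_adj hadj⟩
  injective' := f.injective.sumElim g.injective fun a b hab =>
    Set.disjoint_left.mp h ⟨a, rfl⟩ ⟨b, hab.symm⟩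

theorem range_sumElim (f : Copy H G) (g : Copy H' G) (h : Disjoint (Set.range f) (Set.range g)) :
    Set.range (f.sumElim g h) = Set.range f ∪ Set.range g :=
  Set.Sum.elim_range f g

end Copy

def cherryCopy {v x y : V} (hx : G.Adj v x) (hy : G.Adj v y) (hxy : x ≠ y) :
    Copy (kPaths 1 3) G where
  toHom := ⟨fun p => ![x, v, y] p.2, by
    rintro ⟨i, a⟩ ⟨j, b⟩ ⟨-, hab⟩
    fin_cases a <;> fin_cases b <;> simp_all [hx.symm, hy.symm]⟩
  injective' := by
    rintro ⟨i, a⟩ ⟨j, b⟩ h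
    fin_cases i; fin_cases j
    fin_cases a <;> fin_cases b <;> simp_all [hx.ne, hy.ne, hx.ne', hy.ne', hxy.symm]

theorem range_cherryCopy {v x y : V} (hx : G.Adj v x) (hy : G.Adj v y) (hxy : x ≠ y) :
    Set.range (cherryCopy hx hy hxy) = {x, v, y} := by
  change Set.range (fun p : Fin 1 × Fin 3 => ![x, v, y] p.2) = _
  ext z
  simp [Prod.exists, Fin.exists_fin_succ, eq_comm]

theorem exists_kPaths_succ_copy {m : ℕ} (f : Copy (kPaths m 3) G) {v x y : V}
    (hx : G.Adj v x) (hy : G.Adj v y) (hxy : x ≠ y) (hf : Disjoint (Set.range f) {x, v, y}) :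
    ∃ g : Copy (kPaths (m + 1) 3) G, Set.range g = Set.range f ∪ {x, v, y} := by
  rw [← range_cherryCopy hx hy hxy] at hf ⊢
  refine ⟨(f.sumElim (cherryCopy hx hy hxy) hf).comp (kPathsAddIso m 1 3).toCopy, ?_⟩
  rw [Copy.coe_comp]
  exact ((kPathsAddIso m 1 3).surjective.range_comp _).trans (Copy.range_sumElim ..)

/-- Choosing the cherry at `a ∈ A` forbids three more vertices and removes one centre, which
preserves the bound `#W + 3 * m`. -/
theorem exists_kPaths_copy_disjoint {m : ℕ} {A W : Finset V} (hA : #A = m) (hAW : Disjoint A W)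
    (hdeg : ∀ a ∈ A, #W + 3 * m ≤ (G.neighborSet a).ncard) :
    ∃ f : Copy (kPaths m 3) G, Disjoint (Set.range f) ↑W := by
  classical
  induction m generalizing A W with
  | zero =>
    obtain ⟨f⟩ : kPaths 0 3 ⊑ G := .of_isEmpty
    exact ⟨f, by simp [Set.range_eq_empty]⟩
  | succ m ih =>
    obtain ⟨a, ha⟩ : A.Nonempty := card_pos.mp (by omega)
    have haW : a ∉ W := Finset.disjoint_left.mp hAW ha
    obtain ⟨x, ⟨hax, hx⟩, y, ⟨hay, hy⟩, hxy⟩ :=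
      Set.exists_ne_mem_sdiff_of_card_add_two_le (s := G.neighborSet a) (B := W ∪ A)
        (by have := hdeg a ha; have := card_union_le W A; omega)
    simp only [coe_union, Set.mem_union, mem_coe, not_or] at hx hy
    obtain ⟨f, hf⟩ := ih (A := A.erase a) (W := W ∪ {x, a, y}) (by simp [hA, ha])
      (by
        simp only [disjoint_union_right, disjoint_insert_right, disjoint_singleton_right, mem_erase]
        exact ⟨hAW.mono_left (erase_subset a A), by tauto, by simp, by tauto⟩)
      (fun b hb => by
        have := hdeg b (mem_of_mem_erase hb)
        have := card_union_le W {x, a, y}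
        have := card_le_three (a := x) (b := a) (c := y)
        omega)
    have hW : ({x, a, y} : Set V) ⊆ ↑(W ∪ {x, a, y}) := by push_cast; exact Set.subset_union_right
    obtain ⟨g, hg⟩ := exists_kPaths_succ_copy f hax hay hxy (hf.mono_right hW)
    refine ⟨g, hg ▸ Set.disjoint_union_left.mpr
      ⟨hf.mono_right (coe_subset.mpr subset_union_left), ?_⟩⟩
    simp [hx.1, haW, hy.1]

end SimpleGraph

/-- Lemma 3.1: in a `kP₃`-free graph, after removing `k−1` vertices of degree at
least `n/9`, the induced graph has maximum degree at most 1. -/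
theorem kP3_free_max_degree_le_one (k n : ℕ) (hk : 2 ≤ k)
    (hn : 9 * (k ^ 2 + k + 1) ≤ n)
    (G : SimpleGraph (Fin n)) (hfree : ¬ GContains G (kPaths k 3))
    (A : Finset (Fin n)) (hA : A.card = k - 1)
    (hdeg : ∀ v ∈ A, (n : ℚ) / 9 ≤ ((G.neighborSet v).ncard : ℚ)) :
    ∀ v : Fin n, v ∉ A → (G.neighborSet v \ ↑A).ncard ≤ 1 := by
  intro v hv
  by_contra! h
  obtain ⟨x, ⟨hvx, hxA : x ∉ A⟩, y, ⟨hvy, hyA : y ∉ A⟩, hxy⟩ :=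
    (Set.one_lt_ncard (Set.toFinite _)).mp h
  obtain ⟨K, rfl⟩ : ∃ K, k = K + 1 := ⟨k - 1, by omega⟩
  have hdegA : ∀ a ∈ A, #{x, v, y} + 3 * K ≤ (G.neighborSet a).ncard := fun a ha => by
    have h27 : 27 * (K + 1) ≤ n := by nlinarith [sq_nonneg K]
    have h9 : n ≤ 9 * (G.neighborSet a).ncard := by
      have := hdeg a ha
      exact_mod_cast (by linarith : (n : ℚ) ≤ 9 * (G.neighborSet a).ncard)
    have := card_le_three (a := x) (b := v) (c := y)
    omega
  obtain ⟨f, hf⟩ := exists_kPaths_copy_disjoint (by simpa using hA) (by simp [hv, hxA, hyA]) hdegA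
  obtain ⟨g, -⟩ := exists_kPaths_succ_copy f hvx hvy hxy (by simpa using hf)
  exact hfree ⟨g.toEmbedding, fun _ _ hab => g.toHom.map_adj hab⟩
end
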